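/- Let n ≥ 2 and suppose the growth function is f(k) = n^k − 1. Then for every d ≥ 1 and μ ≥ 0, the cardinality of the nested Smolyak grid is N(d,μ) = (n−1)^d · Σ_{k=0}^{μ} C(d+k−1, k) · n^k. -/

import Mathlib

/-- Multi-indices `i : Fin d → ℕ` with `i k ≥ 1` for all `k` and `∑ k, i k = d + μ`. -/
def smolyakIndices (d μ : ℕ) : Finset (Fin d → ℕ) :=
  (Fintype.piFinset fun _ => Finset.Icc 1 (d + μ)).filter fun i => ∑ k, i k = d + μ

/-- The Smolyak grid `Γ(d, μ)` based on the node sets `S`. -/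
noncomputable def smolyakGrid (S : ℕ → Finset ℝ) (d μ : ℕ) : Finset (Fin d → ℝ) :=
  (smolyakIndices d μ).biUnion fun i => Fintype.piFinset fun k => S (i k)

/-- `N(d, μ)`: the number of nodes in the Smolyak grid. -/
noncomputable def smolyakCard (S : ℕ → Finset ℝ) (d μ : ℕ) : ℕ :=
  (smolyakGrid S d μ).card

/-!
A point `x` lies in `Γ(d, μ)` iff, writing `ℓ(t)` for the first level `j` with `t ∈ S j`, its
levels satisfy `∑ ℓ(x k) ≤ d + μ`: nestedness lets one raise the levels until the sum is exactly
`d + μ`. So `Γ(d, μ)` is the disjoint union, over level vectors `ℓ ≥ 1` with `|ℓ| ≤ d + μ`, of the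
products over `k` of the sets of new nodes `S ℓₖ \ S (ℓₖ - 1)`, of sizes `f ℓₖ - f (ℓₖ - 1)`.
For `f j = nʲ - 1` these are `(n - 1) n^(ℓₖ - 1)`, so a product with `|ℓ| = d + m` has
`(n - 1)ᵈ nᵐ` points, and by stars and bars there are `C(d + m - 1, m)` such `ℓ`.
-/

open Finset

theorem Finset.Nat.card_antidiagonalTuple (d k : ℕ) :
    #(Nat.antidiagonalTuple d k) = (d + k - 1).choose k := by
  rw [card_eq_of_equiv_fintype ((Equiv.subtypeEquivRight fun _ => Nat.mem_antidiagonalTuple).trans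
    (Sym.equivNatSumOfFintype (Fin d) k).symm), Sym.card_sym_eq_choose, Fintype.card_fin]

theorem exists_le_sum_eq {ι : Type*} [Fintype ι] [Nonempty ι] {a : ι → ℕ} {m : ℕ}
    (h : ∑ i, a i ≤ m) : ∃ b, a ≤ b ∧ ∑ i, b i = m := by
  classical
  refine ⟨a + Pi.single (Classical.arbitrary ι) (m - ∑ i, a i), le_self_add, ?_⟩
  simp only [Pi.add_apply, sum_add_distrib, sum_pi_single', mem_univ, if_true]
  omega

lemma mem_smolyakIndices {d μ : ℕ} {i : Fin d → ℕ} :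
    i ∈ smolyakIndices d μ ↔ (∀ k, 1 ≤ i k) ∧ ∑ k, i k = d + μ := by
  simp only [smolyakIndices, mem_filter, Fintype.mem_piFinset, mem_Icc]
  constructor
  · exact fun ⟨hi, hsum⟩ => ⟨fun k => (hi k).1, hsum⟩
  · rintro ⟨hi, hsum⟩
    exact ⟨fun k => ⟨hi k, hsum ▸ single_le_sum (fun j _ => Nat.zero_le (i j)) (mem_univ k)⟩, hsum⟩

section NestedNodes

variable {α : Type*} [DecidableEq α] {S : ℕ → Finset α}

/-- The nodes that first appear in `S (j + 1)`; the level `0` of `S` plays no role. -/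
def newNodes (S : ℕ → Finset α) : ℕ → Finset α
  | 0 => S 1
  | j + 1 => S (j + 2) \ S (j + 1)

lemma newNodes_subset (j : ℕ) : newNodes S j ⊆ S (j + 1) := by
  cases j with
  | zero => exact subset_rfl
  | succ j => exact sdiff_subset

lemma exists_mem_newNodes {x : α} {j : ℕ} (hx : x ∈ S (j + 1)) :
    ∃ i ≤ j, x ∈ newNodes S i := by
  induction j with
  | zero => exact ⟨0, le_rfl, hx⟩
  | succ j ih =>
    by_cases hxj : x ∈ S (j + 1)
    · obtain ⟨i, hij, hi⟩ := ih hxj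
      exact ⟨i, hij.trans j.le_succ, hi⟩
    · exact ⟨j + 1, le_rfl, mem_sdiff.2 ⟨hx, hxj⟩⟩

lemma disjoint_newNodes (hS : Monotone fun k => S (k + 1)) {i j : ℕ} (hij : i ≠ j) :
    Disjoint (newNodes S i) (newNodes S j) := by
  wlog hlt : i < j generalizing i j
  · exact (this hij.symm (by omega)).symm
  obtain ⟨j, rfl⟩ : ∃ j', j = j' + 1 := ⟨j - 1, by omega⟩
  refine disjoint_left.2 fun x hxi hxj => (mem_sdiff.1 hxj).2 ?_
  exact hS (Nat.le_of_lt_succ hlt) (newNodes_subset i hxi)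

lemma card_newNodes_succ (hS : Monotone fun k => S (k + 1)) (j : ℕ) :
    #(newNodes S (j + 1)) = #(S (j + 2)) - #(S (j + 1)) :=
  card_sdiff_of_subset (hS j.le_succ)

lemma card_newNodes_of_card_eq_pow_sub_one {n : ℕ} (hS : Monotone fun k => S (k + 1))
    (hcard : ∀ k, #(S (k + 1)) = n ^ (k + 1) - 1) (j : ℕ) : #(newNodes S j) = (n - 1) * n ^ j := by
  cases j with
  | zero => simpa [newNodes] using hcard 0
  | succ j =>
    rw [card_newNodes_succ hS, hcard, hcard, Nat.sub_one_mul, pow_succ' n (j + 1)]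
    rcases n.eq_zero_or_pos with rfl | hn
    · simp
    · exact tsub_tsub_tsub_cancel_right (Nat.one_le_pow _ _ hn)

end NestedNodes

section Grid

variable {S : ℕ → Finset ℝ} {d μ : ℕ}

lemma mem_smolyakGrid_iff_exists_sum_eq {x : Fin d → ℝ} :
    x ∈ smolyakGrid S d μ ↔ ∃ a : Fin d → ℕ, ∑ k, a k = μ ∧ ∀ k, x k ∈ S (a k + 1) := by
  have sum_succ (a : Fin d → ℕ) : ∑ k, (a k + 1) = ∑ k, a k + d := by simp [sum_add_distrib]
  simp only [smolyakGrid, mem_biUnion, mem_smolyakIndices, Fintype.mem_piFinset]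
  constructor
  · rintro ⟨i, ⟨hi, hsum⟩, hx⟩
    obtain ⟨a, rfl⟩ : ∃ a : Fin d → ℕ, i = fun k => a k + 1 :=
      ⟨fun k => i k - 1, funext fun k => (Nat.sub_add_cancel (hi k)).symm⟩
    exact ⟨a, by rw [sum_succ] at hsum; omega, hx⟩
  · rintro ⟨a, rfl, hx⟩
    exact ⟨fun k => a k + 1, ⟨fun k => Nat.le_add_left 1 (a k), by rw [sum_succ]; omega⟩, hx⟩

lemma mem_smolyakGrid_iff (hS : Monotone fun k => S (k + 1)) (hd : 1 ≤ d) {x : Fin d → ℝ} :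
    x ∈ smolyakGrid S d μ ↔ ∃ a : Fin d → ℕ, ∑ k, a k ≤ μ ∧ ∀ k, x k ∈ newNodes S (a k) := by
  rw [mem_smolyakGrid_iff_exists_sum_eq]
  constructor
  · rintro ⟨a, rfl, hx⟩
    choose b hba hb using fun k => exists_mem_newNodes (hx k)
    exact ⟨b, sum_le_sum fun k _ => hba k, hb⟩
  · rintro ⟨b, hb, hx⟩
    have : Nonempty (Fin d) := ⟨⟨0, hd⟩⟩
    obtain ⟨a, hba, rfl⟩ := exists_le_sum_eq hb
    exact ⟨a, rfl, fun k => hS (hba k) (newNodes_subset _ (hx k))⟩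

lemma smolyakGrid_eq_biUnion (hS : Monotone fun k => S (k + 1)) (hd : 1 ≤ d) :
    smolyakGrid S d μ = ((range (μ + 1)).biUnion (Nat.antidiagonalTuple d)).biUnion
      fun a => Fintype.piFinset fun k => newNodes S (a k) := by
  ext x
  simp only [mem_smolyakGrid_iff hS hd, mem_biUnion, mem_range, Nat.mem_antidiagonalTuple,
    Fintype.mem_piFinset, Nat.lt_succ_iff]
  constructor
  · rintro ⟨a, ha, hx⟩
    exact ⟨a, ⟨_, ha, rfl⟩, hx⟩
  · rintro ⟨a, ⟨_, ha, rfl⟩, hx⟩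
    exact ⟨a, ha, hx⟩

lemma smolyakCard_eq_sum (hS : Monotone fun k => S (k + 1)) (hd : 1 ≤ d) :
    smolyakCard S d μ =
      ∑ k ∈ range (μ + 1), ∑ a ∈ Nat.antidiagonalTuple d k, ∏ i, #(newNodes S (a i)) := by
  rw [smolyakCard, smolyakGrid_eq_biUnion hS hd, card_biUnion, sum_biUnion]
  · simp only [Fintype.card_piFinset]
  · intro k _ l _ hkl
    refine disjoint_left.2 fun a hak hal => hkl ?_
    rw [Nat.mem_antidiagonalTuple] at hak hal
    rw [← hak, ← hal]
  · intro a _ b _ hab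
    obtain ⟨k, hk⟩ := Function.ne_iff.1 hab
    exact disjoint_left.2 fun x hxa hxb => disjoint_left.1 (disjoint_newNodes hS hk)
      (Fintype.mem_piFinset.1 hxa k) (Fintype.mem_piFinset.1 hxb k)

end Grid

theorem smolyakCard_of_pow_sub_one_general
    (n : ℕ)
    (S : ℕ → Finset ℝ) (hS_nested : ∀ k, 1 ≤ k → S k ⊆ S (k + 1))
    (hS_card : ∀ k, 1 ≤ k → (S k).card = n ^ k - 1)
    (d μ : ℕ) (hd : 1 ≤ d) :
    smolyakCard S d μ =
      (n - 1) ^ d * ∑ k ∈ Finset.range (μ + 1), (d + k - 1).choose k * n ^ k := by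
  have hS : Monotone fun k => S (k + 1) :=
    monotone_nat_of_le_succ fun k => hS_nested (k + 1) k.succ_pos
  have hcard_new := card_newNodes_of_card_eq_pow_sub_one hS fun k => hS_card (k + 1) k.succ_pos
  rw [smolyakCard_eq_sum hS hd, mul_sum]
  refine sum_congr rfl fun k _ => ?_
  calc ∑ a ∈ Nat.antidiagonalTuple d k, ∏ i, #(newNodes S (a i))
      = ∑ a ∈ Nat.antidiagonalTuple d k, (n - 1) ^ d * n ^ k := by
        refine sum_congr rfl fun a ha => ?_
        rw [← Nat.mem_antidiagonalTuple.1 ha]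
        simp only [hcard_new, prod_mul_distrib, prod_const, card_univ, Fintype.card_fin,
          prod_pow_eq_pow_sum]
    _ = (n - 1) ^ d * ((d + k - 1).choose k * n ^ k) := by
        rw [sum_const, Nat.card_antidiagonalTuple, smul_eq_mul]
        ring

/-- For the growth function `f(k) = nᵏ - 1` (with `n ≥ 2`), the nested Smolyak grid has
`N(d, μ) = (n-1)^d · ∑_{k=0}^{μ} C(d+k-1, k) nᵏ` nodes. -/
theorem smolyakCard_of_pow_sub_one
    (n : ℕ) (hn : 2 ≤ n)
    (S : ℕ → Finset ℝ) (hS_nested : ∀ k, 1 ≤ k → S k ⊆ S (k + 1))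
    (hS_card : ∀ k, 1 ≤ k → (S k).card = n ^ k - 1)
    (d μ : ℕ) (hd : 1 ≤ d) :
    smolyakCard S d μ =
      (n - 1) ^ d * ∑ k ∈ Finset.range (μ + 1), (d + k - 1).choose k * n ^ k :=
  smolyakCard_of_pow_sub_one_general n S hS_nested hS_card d μ hd
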